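/- arXiv:2306.04702 — 5 statements merged into one kernel-verified Lean document; each statement's English description precedes it below -/
import Mathlib

section
/- For every a ≥ 0, the truncated second moment ν_a = E(Z² | |Z| ≥ a) of a standard Gaussian Z satisfies a² + 1 ≤ ν_a ≤ a² + 2. -/
/-! Write `φ` for the standard normal density and `Q(a) = ∫_a^∞ φ`. By symmetry `ν_a` is the
ratio `∫_a^∞ z²φ / Q(a)`, and since `φ' = -zφ`, integration by parts gives `∫_a^∞ zφ = φ(a)` and
`∫_a^∞ z²φ = aφ(a) + Q(a)`, so `ν_a = 1 + aφ(a)/Q(a)`. Both bounds are then Mills' inequalities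
`a Q(a) ≤ φ(a)` and `a φ(a) ≤ (a² + 1) Q(a)`, which say that `∫_a^∞ (z - a)φ = φ(a) - aQ(a)` and
`∫_a^∞ (z - a)²φ = (a² + 1)Q(a) - aφ(a)` are nonnegative. -/

open MeasureTheory ProbabilityTheory Real
open scoped ENNReal NNReal Classical

/-- `ν_a = E(Z² | |Z| ≥ a)` for a standard Gaussian `Z`. -/
noncomputable def nuGauss (a : ℝ) : ℝ :=
  (∫ z in {z : ℝ | a ≤ |z|}, z ^ 2 ∂(gaussianReal 0 1)) /
    ((gaussianReal 0 1) {z : ℝ | a ≤ |z|}).toReal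

open Set

theorem integral_Ioi_of_hasDerivAt_of_integrableOn {f f' : ℝ → ℝ} {a : ℝ}
    (hderiv : ∀ x ∈ Ici a, HasDerivAt f (f' x) x) (hf' : IntegrableOn f' (Ioi a))
    (hf : IntegrableOn f (Ioi a)) : ∫ x in Ioi a, f' x = -f a := by
  have hlim := tendsto_zero_of_hasDerivAt_of_integrableOn_Ioi
    (fun x hx => hderiv x (mem_Ici_of_Ioi hx)) hf' hf
  rw [integral_Ioi_of_hasDerivAt_of_tendsto' hderiv hf' hlim, zero_sub]

theorem setIntegral_le_abs_eq_two_mul_setIntegral_Ioi {f : ℝ → ℝ} {a : ℝ} (ha : 0 ≤ a)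
    (heven : f.Even) (hf : Integrable f) :
    ∫ x in {x | a ≤ |x|}, f x = 2 * ∫ x in Ioi a, f x := by
  have hset : {x : ℝ | a ≤ |x|} = Iic (-a) ∪ Ici a := by
    ext x
    simp only [mem_ofPred_eq, mem_union, mem_Iic, mem_Ici, le_abs, le_neg]
    tauto
  have hdisj : AEDisjoint volume (Iic (-a)) (Ici a) := by
    refine measure_mono_null (fun x hx => ?_) (measure_singleton (0 : ℝ))
    simp only [mem_inter_iff, mem_Iic, mem_Ici] at hx
    exact le_antisymm (by linarith [hx.1, hx.2]) (by linarith [hx.1, hx.2])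
  rw [hset, setIntegral_union₀ hdisj measurableSet_Ici.nullMeasurableSet hf.integrableOn
    hf.integrableOn, ← integral_comp_neg_Ioi, integral_Ici_eq_integral_Ioi]
  simp only [show ∀ x, f (-x) = f x from heven]
  ring

section GaussianPDF

theorem hasDerivAt_gaussianPDFReal (μ : ℝ) (v : ℝ≥0) (x : ℝ) :
    HasDerivAt (gaussianPDFReal μ v) (-(x - μ) / v * gaussianPDFReal μ v x) x := by
  have hexponent : HasDerivAt (fun x => -(x - μ) ^ 2 / (2 * v)) (-(x - μ) / v) x := by
    have := (((hasDerivAt_id x).sub_const μ).pow 2).neg.div_const (2 * (v : ℝ))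
    simp only [id_eq] at this
    exact this.congr_deriv (by ring)
  rw [gaussianPDFReal_def]
  exact (hexponent.exp.const_mul (√(2 * π * v))⁻¹).congr_deriv (by ring)

theorem even_gaussianPDFReal_zero (v : ℝ≥0) : (gaussianPDFReal 0 v).Even := fun x => by
  simp [gaussianPDFReal]

theorem setIntegral_gaussianReal_eq_setIntegral_smul {E : Type*} [NormedAddCommGroup E]
    [NormedSpace ℝ E] {μ : ℝ} {v : ℝ≥0} (hv : v ≠ 0) (f : ℝ → E) (s : Set ℝ) :
    ∫ x in s, f x ∂gaussianReal μ v = ∫ x in s, gaussianPDFReal μ v x • f x := by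
  rw [gaussianReal_of_var_ne_zero _ hv, setIntegral_withDensity_eq_setIntegral_toReal_smul' s
    (measurable_gaussianPDF _ _) (ae_of_all _ fun _ => gaussianPDF_lt_top)]
  simp only [toReal_gaussianPDF]

theorem measureReal_gaussianReal_eq_setIntegral {μ : ℝ} {v : ℝ≥0} (hv : v ≠ 0) (s : Set ℝ) :
    (gaussianReal μ v).real s = ∫ x in s, gaussianPDFReal μ v x := by
  simpa using setIntegral_gaussianReal_eq_setIntegral_smul (μ := μ) hv (fun _ => (1 : ℝ)) s

theorem integral_Ioi_gaussianPDFReal_pos (μ : ℝ) {v : ℝ≥0} (hv : v ≠ 0) (a : ℝ) :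
    0 < ∫ x in Ioi a, gaussianPDFReal μ v x := by
  have hsupp : Function.support (gaussianPDFReal μ v) = univ :=
    eq_univ_of_forall fun x => (gaussianPDFReal_pos μ v x hv).ne'
  rw [setIntegral_pos_iff_support_of_nonneg_ae (ae_of_all _ (gaussianPDFReal_nonneg μ v))
    (integrable_gaussianPDFReal μ v).integrableOn, hsupp, univ_inter]
  simp

local notation "φ" => gaussianPDFReal 0 1

theorem integrable_pow_mul_gaussianPDFReal (n : ℕ) : Integrable fun x => x ^ n * φ x := by
  have := (integrable_rpow_mul_exp_neg_mul_sq (b := 1 / 2) (by norm_num)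
    (s := n) (by linarith [n.cast_nonneg (α := ℝ)])).const_mul (√(2 * π))⁻¹
  refine this.congr (ae_of_all _ fun x => ?_)
  simp only [rpow_natCast, gaussianPDFReal, sub_zero, NNReal.coe_one, mul_one]
  ring_nf

theorem integrable_id_mul_gaussianPDFReal : Integrable fun x => x * φ x := by
  simpa using integrable_pow_mul_gaussianPDFReal 1

theorem integral_Ioi_id_mul_gaussianPDFReal (a : ℝ) : ∫ x in Ioi a, x * φ x = φ a := by
  have hderiv : ∀ x ∈ Ici a, HasDerivAt (fun x => -φ x) (x * φ x) x :=
    fun x _ => (hasDerivAt_gaussianPDFReal 0 1 x).neg.congr_deriv (by simp)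
  rw [integral_Ioi_of_hasDerivAt_of_integrableOn hderiv
    integrable_id_mul_gaussianPDFReal.integrableOn
    (integrable_gaussianPDFReal 0 1).neg.integrableOn, neg_neg]

theorem integral_Ioi_sq_mul_gaussianPDFReal (a : ℝ) :
    ∫ x in Ioi a, x ^ 2 * φ x = a * φ a + ∫ x in Ioi a, φ x := by
  have hderiv : ∀ x ∈ Ici a, HasDerivAt (fun x => -x * φ x) (x ^ 2 * φ x - φ x) x :=
    fun x _ => ((hasDerivAt_id x).neg.mul (hasDerivAt_gaussianPDFReal 0 1 x)).congr_deriv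
      (by simp; ring)
  have h := integral_Ioi_of_hasDerivAt_of_integrableOn hderiv
    ((integrable_pow_mul_gaussianPDFReal 2).sub (integrable_gaussianPDFReal 0 1)).integrableOn
    (integrable_id_mul_gaussianPDFReal.neg.congr
      (ae_of_all _ fun x => (neg_mul x _).symm)).integrableOn
  rw [integral_sub (integrable_pow_mul_gaussianPDFReal 2).integrableOn
    (integrable_gaussianPDFReal 0 1).integrableOn] at h
  linarith

theorem mul_integral_Ioi_gaussianPDFReal_le (a : ℝ) : a * ∫ x in Ioi a, φ x ≤ φ a := by
  have hnonneg : 0 ≤ ∫ x in Ioi a, (x - a) * φ x :=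
    setIntegral_nonneg measurableSet_Ioi fun x hx =>
      mul_nonneg (sub_nonneg.mpr hx.out.le) (gaussianPDFReal_nonneg 0 1 x)
  have hexpand : ∫ x in Ioi a, (x - a) * φ x = φ a - a * ∫ x in Ioi a, φ x := by
    simp_rw [sub_mul]
    rw [integral_sub integrable_id_mul_gaussianPDFReal.integrableOn
      ((integrable_gaussianPDFReal 0 1).const_mul a).integrableOn, integral_const_mul,
      integral_Ioi_id_mul_gaussianPDFReal]
  linarith

theorem mul_gaussianPDFReal_le_integral_Ioi (a : ℝ) :
    a * φ a ≤ (a ^ 2 + 1) * ∫ x in Ioi a, φ x := by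
  have hnonneg : 0 ≤ ∫ x in Ioi a, (x - a) ^ 2 * φ x :=
    setIntegral_nonneg measurableSet_Ioi fun x _ =>
      mul_nonneg (sq_nonneg _) (gaussianPDFReal_nonneg 0 1 x)
  have hexpand : ∫ x in Ioi a, (x - a) ^ 2 * φ x = (∫ x in Ioi a, x ^ 2 * φ x)
      - 2 * a * (∫ x in Ioi a, x * φ x) + a ^ 2 * ∫ x in Ioi a, φ x := by
    have hsq := (integrable_pow_mul_gaussianPDFReal 2).integrableOn (s := Ioi a)
    have hid := (integrable_id_mul_gaussianPDFReal.const_mul (2 * a)).integrableOn (s := Ioi a)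
    have hpoint : ∀ x, (x - a) ^ 2 * φ x = x ^ 2 * φ x - 2 * a * (x * φ x) + a ^ 2 * φ x :=
      fun x => by ring
    simp_rw [hpoint]
    rw [integral_add ?_ ((integrable_gaussianPDFReal 0 1).const_mul _).integrableOn,
      integral_sub hsq hid, integral_const_mul, integral_const_mul]
    exact hsq.sub hid
  rw [integral_Ioi_sq_mul_gaussianPDFReal, integral_Ioi_id_mul_gaussianPDFReal] at hexpand
  linarith

theorem nuGauss_eq_div_integral_Ioi {a : ℝ} (ha : 0 ≤ a) :
    nuGauss a = (a * φ a + ∫ x in Ioi a, φ x) / ∫ x in Ioi a, φ x := by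
  rw [nuGauss, ← measureReal_def, setIntegral_gaussianReal_eq_setIntegral_smul one_ne_zero,
    measureReal_gaussianReal_eq_setIntegral one_ne_zero]
  simp_rw [smul_eq_mul, mul_comm (φ _)]
  rw [setIntegral_le_abs_eq_two_mul_setIntegral_Ioi ha (even_gaussianPDFReal_zero 1)
      (integrable_gaussianPDFReal 0 1),
    setIntegral_le_abs_eq_two_mul_setIntegral_Ioi ha
      (fun x => by rw [even_gaussianPDFReal_zero, neg_sq])
      (integrable_pow_mul_gaussianPDFReal 2),
    mul_div_mul_left _ _ two_ne_zero, integral_Ioi_sq_mul_gaussianPDFReal]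

end GaussianPDF

/-- For every `a ≥ 0`, the truncated second moment `ν_a = E(Z² | |Z| ≥ a)` of a standard
Gaussian `Z` satisfies `a² + 1 ≤ ν_a ≤ a² + 2`. -/
theorem nuGauss_bounds (a : ℝ) (ha : 0 ≤ a) :
    a ^ 2 + 1 ≤ nuGauss a ∧ nuGauss a ≤ a ^ 2 + 2 := by
  have hQ := integral_Ioi_gaussianPDFReal_pos 0 one_ne_zero a
  have hmills_upper := mul_integral_Ioi_gaussianPDFReal_le a
  have hmills_lower := mul_gaussianPDFReal_le_integral_Ioi a
  rw [nuGauss_eq_div_integral_Ioi ha, le_div_iff₀ hQ, div_le_iff₀ hQ]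
  constructor
  · nlinarith [mul_le_mul_of_nonneg_left hmills_upper ha]
  · linarith
end

section
/- Let Z be a standard Gaussian random variable, a ≥ 1, ν_a = E(Z² | |Z| ≥ a), and X = (Z² − ν_a)·1{|Z| ≥ a}. Then for every λ ∈ (0, 1/2], E(e^{−λX}) ≤ exp(6·λ²·e^{−a²/2}). -/
open MeasureTheory ProbabilityTheory Real
open scoped ENNReal NNReal Classical

/-!
Write `X = f(Z)` with `f z = (z² - ν_a) 1{|z| ≥ a}` and `φ` for the standard normal density.
The lower Mills bound `P(Z > a) ≥ a φ(a) / (a² + 1)` gives `ν_a ≤ a² + 2`, hence `-λX ≤ 2λ ≤ 1`,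
and on `(-∞, 1]` the exponential lies below `1 + y + (3/4) y²`. As `E X = 0`, this yields
`E e^{-λX} ≤ exp((3/4) λ² E X²)`.

Since `ν_a` is the mean of `Z²` on `{|Z| ≥ a}`, `E X² ≤ E[(Z² - a²)² 1{|Z| ≥ a}]`. Stein's identity
`∫_a^∞ (z h(z) - h'(z)) φ(z) dz = h(a) φ(a)` evaluates the right side as
`2 ((3a - a³) φ(a) + (a⁴ - 2a² + 3) P(Z > a))`, and the upper Mills bound
`P(Z > a) ≤ (1/a - 1/a³ + 3/a⁵) φ(a)` turns it into at most `16 φ(a) ≤ 8 e^{-a²/2}`.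
-/

open Filter Set Topology Asymptotics

theorem exp_le_one_add_add_three_quarters_mul_sq {y : ℝ} (hy : y ≤ 1) :
    exp y ≤ 1 + y + 3 / 4 * y ^ 2 := by
  rcases le_or_gt (-1) y with h | h
  · have := Real.exp_bound (abs_le.2 ⟨h, hy⟩) (n := 2) two_pos
    norm_num [Finset.sum_range_succ, Nat.factorial] at this
    nlinarith [abs_le.1 this, sq_abs y]
  · nlinarith [exp_neg_one_lt_half, exp_le_exp.2 h.le]

section Moments

variable {α : Type*} [MeasurableSpace α] {μ : Measure α}

theorem integral_exp_le_exp_integral_sq [IsProbabilityMeasure μ] {X : α → ℝ}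
    (hX : MemLp X 2 μ) (hmean : ∫ x, X x ∂μ = 0) (hle : ∀ x, X x ≤ 1) :
    ∫ x, exp (X x) ∂μ ≤ exp (3 / 4 * ∫ x, X x ^ 2 ∂μ) := by
  have hX1 : Integrable X μ := hX.integrable one_le_two
  have hX2 : Integrable (fun x => 3 / 4 * X x ^ 2) μ := hX.integrable_sq.const_mul _
  have hlin : Integrable (fun x => 1 + X x) μ := (integrable_const 1).add hX1
  calc ∫ x, exp (X x) ∂μ ≤ ∫ x, 1 + X x + 3 / 4 * X x ^ 2 ∂μ :=
        integral_mono_of_nonneg (ae_of_all _ fun x => (exp_pos _).le) (hlin.add hX2)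
          (ae_of_all _ fun x => exp_le_one_add_add_three_quarters_mul_sq (hle x))
    _ = 1 + 3 / 4 * ∫ x, X x ^ 2 ∂μ := by
        rw [integral_add hlin hX2, integral_add (integrable_const 1) hX1, integral_const_mul,
          hmean]
        simp
    _ ≤ exp (3 / 4 * ∫ x, X x ^ 2 ∂μ) := by
        linarith [add_one_le_exp (3 / 4 * ∫ x, X x ^ 2 ∂μ)]

theorem setIntegral_sq_sub_setAverage_le {s : Set α} (hs : μ s ≠ ∞) {g : α → ℝ}
    (hg : MemLp g 2 (μ.restrict s)) (d : ℝ) :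
    ∫ x in s, (g x - ⨍ y in s, g y ∂μ) ^ 2 ∂μ ≤ ∫ x in s, (g x - d) ^ 2 ∂μ := by
  have : Fact (μ s < ∞) := ⟨hs.lt_top⟩
  set c := ⨍ y in s, g y ∂μ
  have hgc : MemLp (fun x => g x - c) 2 (μ.restrict s) := hg.sub (memLp_const c)
  have hcentered : ∫ x in s, (g x - c) ∂μ = 0 := setAverage_sub_setAverage hs g
  have hsq : Integrable (fun x => (g x - c) ^ 2) (μ.restrict s) := hgc.integrable_sq
  have hlin : Integrable (fun x => 2 * (c - d) * (g x - c)) (μ.restrict s) :=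
    (hgc.integrable one_le_two).const_mul _
  have hexpand : ∫ x in s, (g x - d) ^ 2 ∂μ
      = ∫ x in s, (g x - c) ^ 2 ∂μ + 2 * (c - d) * ∫ x in s, (g x - c) ∂μ
        + μ.real s * (c - d) ^ 2 := by
    calc ∫ x in s, (g x - d) ^ 2 ∂μ
        = ∫ x in s, ((g x - c) ^ 2 + 2 * (c - d) * (g x - c)) + (c - d) ^ 2 ∂μ := by
          congr with x; ring
      _ = _ := by
          have hquad : Integrable (fun x => (g x - c) ^ 2 + 2 * (c - d) * (g x - c))
              (μ.restrict s) := hsq.add hlin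
          rw [integral_add hquad (integrable_const _), integral_add hsq hlin,
            integral_const_mul, setIntegral_const, smul_eq_mul]
  rw [hexpand, hcentered]
  nlinarith [measureReal_nonneg (μ := μ) (s := s), sq_nonneg (c - d)]

end Moments

local notation "φ" => gaussianPDFReal 0 1

lemma gaussianPDFReal_zero_one :
    φ = fun x => (√(2 * π))⁻¹ * exp (-x ^ 2 / 2) := by
  ext x; simp [gaussianPDFReal]

lemma hasDerivAt_gaussianPDFReal_zero_one (x : ℝ) : HasDerivAt φ (-x * φ x) x := by
  have hq : HasDerivAt (fun y : ℝ => -y ^ 2 / 2) (-x) x :=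
    ((hasDerivAt_pow 2 x).fun_neg.div_const 2).congr_deriv (by norm_num; ring)
  rw [gaussianPDFReal_zero_one]
  exact (hq.exp.const_mul _).congr_deriv (by ring)

lemma integrable_pow_mul_gaussianPDFReal_zero_one (n : ℕ) :
    Integrable fun z => z ^ n * φ z := by
  have := (integrable_rpow_mul_exp_neg_mul_sq (b := 2⁻¹) (by norm_num)
    (by linarith [n.cast_nonneg (α := ℝ)] : (-1 : ℝ) < n)).const_mul (√(2 * π))⁻¹
  refine this.congr (ae_of_all _ fun z => ?_)
  simp only [gaussianPDFReal_zero_one, rpow_natCast]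
  rw [show -z ^ 2 / 2 = -2⁻¹ * z ^ 2 by ring]
  ring

lemma tendsto_pow_mul_gaussianPDFReal_zero_one_atTop (n : ℕ) :
    Tendsto (fun z => z ^ n * φ z) atTop (𝓝 0) := by
  have hexp : Tendsto (fun z : ℝ => z ^ n * exp (-z ^ 2 / 2)) atTop (𝓝 0) := by
    refine squeeze_zero' ?_ ?_ (tendsto_pow_mul_exp_neg_atTop_nhds_zero n)
    · filter_upwards [eventually_ge_atTop 0] with z hz
      positivity
    · filter_upwards [eventually_ge_atTop 2] with z hz
      gcongr
      nlinarith
  simpa [gaussianPDFReal_zero_one, mul_left_comm] using hexp.const_mul (√(2 * π))⁻¹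

lemma tendsto_mul_gaussianPDFReal_zero_one_atTop {r : ℝ → ℝ} {n : ℕ}
    (hr : r =O[atTop] fun z => z ^ n) : Tendsto (fun z => r z * φ z) atTop (𝓝 0) :=
  (hr.mul (isBigO_refl φ atTop)).trans_tendsto
    (tendsto_pow_mul_gaussianPDFReal_zero_one_atTop n)

theorem setIntegral_Ioi_mul_gaussianPDFReal_zero_one_of_hasDerivAt {g h h' : ℝ → ℝ} {a c : ℝ}
    {n : ℕ} (hderiv : ∀ x ∈ Ici a, HasDerivAt h (h' x) x)
    (hg : ∀ z ∈ Ioi a, g z = z * h z - h' z + c)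
    (hint : IntegrableOn (fun z => g z * φ z) (Ioi a))
    (hgrowth : h =O[atTop] fun z => z ^ n) :
    ∫ z in Ioi a, g z * φ z = h a * φ a + c * ∫ z in Ioi a, φ z := by
  have hφ : IntegrableOn φ (Ioi a) := (integrable_gaussianPDFReal 0 1).integrableOn
  have hint' : IntegrableOn (fun z => g z * φ z - c * φ z) (Ioi a) := hint.sub (hφ.const_mul c)
  have hF : ∀ x ∈ Ici a,
      HasDerivAt (fun z => -(h z * φ z)) (-(h' x * φ x + h x * (-x * φ x))) x :=
    fun x hx => ((hderiv x hx).mul (hasDerivAt_gaussianPDFReal_zero_one x)).neg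
  have hftc := integral_Ioi_of_hasDerivAt_of_tendsto
    (hF a self_mem_Ici).continuousAt.continuousWithinAt
    (fun x hx => (hF x (mem_Ici_of_Ioi hx)).congr_deriv (by rw [hg x hx]; ring)) hint'
    (tendsto_mul_gaussianPDFReal_zero_one_atTop hgrowth).neg
  rw [integral_sub hint (hφ.const_mul c), integral_const_mul] at hftc
  linarith

lemma setIntegral_Ioi_sq_mul_gaussianPDFReal_zero_one (a : ℝ) :
    ∫ z in Ioi a, z ^ 2 * φ z = a * φ a + ∫ z in Ioi a, φ z := by
  simpa using setIntegral_Ioi_mul_gaussianPDFReal_zero_one_of_hasDerivAt (h := fun z => z)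
    (h' := fun _ => 1) (c := 1) (n := 1) (fun x _ => hasDerivAt_id' x) (fun z _ => by ring)
    (integrable_pow_mul_gaussianPDFReal_zero_one 2).integrableOn
    (by simpa using isBigO_refl (fun z : ℝ => z) atTop)

lemma integrable_sq_sub_sq_sq_mul_gaussianPDFReal_zero_one (a : ℝ) :
    Integrable fun z => (z ^ 2 - a ^ 2) ^ 2 * φ z := by
  refine (((integrable_pow_mul_gaussianPDFReal_zero_one 4).sub
    ((integrable_pow_mul_gaussianPDFReal_zero_one 2).const_mul (2 * a ^ 2))).add
    ((integrable_pow_mul_gaussianPDFReal_zero_one 0).const_mul (a ^ 4))).congr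
    (ae_of_all _ fun z => ?_)
  simp only [Pi.add_apply, Pi.sub_apply]
  ring

lemma setIntegral_Ioi_sq_sub_sq_sq_mul_gaussianPDFReal_zero_one (a : ℝ) :
    ∫ z in Ioi a, (z ^ 2 - a ^ 2) ^ 2 * φ z
      = (3 * a - a ^ 3) * φ a + (a ^ 4 - 2 * a ^ 2 + 3) * ∫ z in Ioi a, φ z := by
  have hgrowth : (fun z : ℝ => z ^ 3 + (3 - 2 * a ^ 2) * z) =O[atTop] fun z => z ^ 3 :=
    (isBigO_refl _ _).add (by
      simpa using ((isLittleO_pow_pow_atTop_of_lt (𝕜 := ℝ) (by norm_num : 1 < 3)).isBigO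
        ).const_mul_left (3 - 2 * a ^ 2))
  convert setIntegral_Ioi_mul_gaussianPDFReal_zero_one_of_hasDerivAt
    (h' := fun z => 3 * z ^ 2 + (3 - 2 * a ^ 2)) (c := a ^ 4 - 2 * a ^ 2 + 3)
    (fun x _ => ((hasDerivAt_pow 3 x).add ((hasDerivAt_id x).const_mul _)).congr_deriv
      (by simp)) (fun z _ => by ring)
    (integrable_sq_sub_sq_sq_mul_gaussianPDFReal_zero_one a).integrableOn hgrowth using 2
  ring

lemma div_sq_add_one_mul_gaussianPDFReal_zero_one_le (a : ℝ) :
    a / (a ^ 2 + 1) * φ a ≤ ∫ z in Ioi a, φ z := by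
  have hbdd : ∀ z : ℝ, |1 - 2 / (z ^ 2 + 1) ^ 2| ≤ 1 := by
    intro z
    have : 2 / (z ^ 2 + 1) ^ 2 ≤ 2 := div_le_self zero_le_two (one_le_pow₀ (by nlinarith))
    rw [abs_le]
    constructor <;> nlinarith [div_nonneg zero_le_two (sq_nonneg (z ^ 2 + 1))]
  have hint : Integrable fun z => (1 - 2 / (z ^ 2 + 1) ^ 2) * φ z :=
    (integrable_gaussianPDFReal 0 1).bdd_mul
      (by fun_prop : Measurable fun z : ℝ => 1 - 2 / (z ^ 2 + 1) ^ 2).aestronglyMeasurable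
      (ae_of_all _ hbdd)
  have hgrowth : (fun z : ℝ => z / (z ^ 2 + 1)) =O[atTop] fun z => z ^ 0 := by
    refine IsBigO.of_bound 1 (Eventually.of_forall fun z => ?_)
    rw [pow_zero, norm_one, mul_one, norm_div,
      Real.norm_of_nonneg (by positivity : (0 : ℝ) ≤ z ^ 2 + 1), div_le_one (by positivity),
      Real.norm_eq_abs]
    nlinarith [sq_abs z, sq_nonneg (|z| - 1)]
  have hderiv : ∀ x : ℝ,
      HasDerivAt (fun z => z / (z ^ 2 + 1)) ((1 - x ^ 2) / (x ^ 2 + 1) ^ 2) x := fun x =>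
    ((hasDerivAt_id' x).div ((hasDerivAt_pow 2 x).add_const 1) (by positivity)).congr_deriv
      (by field_simp; ring)
  have hstein := setIntegral_Ioi_mul_gaussianPDFReal_zero_one_of_hasDerivAt (a := a) (c := 0)
    (fun x _ => hderiv x) (fun z _ => by field_simp; ring) hint.integrableOn hgrowth
  rw [zero_mul, add_zero] at hstein
  rw [← hstein]
  refine setIntegral_mono hint.integrableOn (integrable_gaussianPDFReal 0 1).integrableOn
    fun z => ?_
  nlinarith [gaussianPDFReal_nonneg 0 1 z, div_nonneg zero_le_two (sq_nonneg (z ^ 2 + 1))]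

lemma setIntegral_Ioi_gaussianPDFReal_zero_one_le {a : ℝ} (ha : 0 < a) :
    ∫ z in Ioi a, φ z ≤ (a⁻¹ - (a ^ 3)⁻¹ + 3 * (a ^ 5)⁻¹) * φ a := by
  have hbdd : ∀ z ∈ Ioi a, ‖1 + 15 * (z ^ 6)⁻¹‖ ≤ 1 + 15 * (a ^ 6)⁻¹ := fun z hz => by
    have hz : a ≤ z := le_of_lt hz
    rw [Real.norm_of_nonneg (by positivity)]
    gcongr
  have hint : IntegrableOn (fun z => (1 + 15 * (z ^ 6)⁻¹) * φ z) (Ioi a) :=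
    (integrable_gaussianPDFReal 0 1).integrableOn.bdd_mul
      (by fun_prop : Measurable fun z : ℝ => 1 + 15 * (z ^ 6)⁻¹).aestronglyMeasurable
      ((ae_restrict_iff' measurableSet_Ioi).2 (ae_of_all _ hbdd))
  have hgrowth : (fun z : ℝ => z⁻¹ - (z ^ 3)⁻¹ + 3 * (z ^ 5)⁻¹) =O[atTop] fun z => z ^ 0 := by
    have hinv : ∀ k : ℕ, 0 < k → Tendsto (fun z : ℝ => (z ^ k)⁻¹) atTop (𝓝 0) := fun k hk =>
      tendsto_inv_atTop_zero.comp (tendsto_pow_atTop hk.ne')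
    have h1 : Tendsto (fun z : ℝ => z⁻¹) atTop (𝓝 0) := tendsto_inv_atTop_zero
    simpa using ((h1.sub (hinv 3 (by norm_num))).add
      ((hinv 5 (by norm_num)).const_mul 3)).isBigO_one ℝ
  have hderiv : ∀ x ∈ Ici a, HasDerivAt (fun z : ℝ => z⁻¹ - (z ^ 3)⁻¹ + 3 * (z ^ 5)⁻¹)
      (-(x ^ 2)⁻¹ + 3 * (x ^ 4)⁻¹ - 15 * (x ^ 6)⁻¹) x := fun x hx => by
    have hx : x ≠ 0 := (ha.trans_le hx).ne'
    exact (((hasDerivAt_inv hx).sub ((hasDerivAt_pow 3 x).inv (pow_ne_zero 3 hx))).add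
      (((hasDerivAt_pow 5 x).inv (pow_ne_zero 5 hx)).const_mul 3)).congr_deriv
      (by field_simp; ring)
  have hstein := setIntegral_Ioi_mul_gaussianPDFReal_zero_one_of_hasDerivAt (c := 0) hderiv
    (fun z hz => by have : z ≠ 0 := (ha.trans hz).ne'; field_simp; ring) hint hgrowth
  rw [zero_mul, add_zero] at hstein
  rw [← hstein]
  refine setIntegral_mono_on (integrable_gaussianPDFReal 0 1).integrableOn hint measurableSet_Ioi
    fun z hz => ?_
  have : 0 < z := ha.trans hz
  nlinarith [gaussianPDFReal_nonneg 0 1 z, inv_pos.2 (pow_pos this 6)]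

lemma measurableSet_le_abs (a : ℝ) : MeasurableSet {z : ℝ | a ≤ |z|} :=
  measurableSet_le measurable_const measurable_abs

lemma setIntegral_le_abs_gaussianReal_eq_two_mul {a : ℝ} (ha : 0 < a) {g : ℝ → ℝ}
    (heven : ∀ z, g (-z) = g z) (hg : Integrable fun z => g z * φ z) :
    ∫ z in {z | a ≤ |z|}, g z ∂gaussianReal 0 1 = 2 * ∫ z in Ioi a, g z * φ z := by
  have hdensity : ∫ z in {z | a ≤ |z|}, g z ∂gaussianReal 0 1
      = ∫ z in {z | a ≤ |z|}, g z * φ z := by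
    rw [← integral_indicator (measurableSet_le_abs a),
      ← integral_indicator (measurableSet_le_abs a),
      integral_gaussianReal_eq_integral_smul one_ne_zero]
    congr with z
    by_cases hz : a ≤ |z| <;> simp [indicator, hz, mul_comm]
  have hsplit : {z : ℝ | a ≤ |z|} = Iic (-a) ∪ Ici a := by
    ext z
    simp only [mem_ofPred_eq, mem_union, mem_Iic, mem_Ici, le_abs]
    constructor <;> rintro (h | h) <;> first | (left; linarith) | (right; linarith)
  have hreflect : ∫ z in Iic (-a), g z * φ z = ∫ z in Ioi a, g z * φ z := by
    have hφeven : ∀ z, φ (-z) = φ z := fun z => by simp [gaussianPDFReal_zero_one]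
    simpa [heven, hφeven] using integral_comp_neg_Iic (-a) fun z => g z * φ z
  rw [hdensity, hsplit, setIntegral_union (Iic_disjoint_Ici.2 (by linarith)) measurableSet_Ici
    hg.integrableOn hg.integrableOn, hreflect, integral_Ici_eq_integral_Ioi, two_mul]

lemma nuGauss_eq_setAverage (a : ℝ) :
    nuGauss a = ⨍ z in {z | a ≤ |z|}, z ^ 2 ∂gaussianReal 0 1 := by
  rw [setAverage_eq, smul_eq_mul, nuGauss, div_eq_inv_mul]
  rfl

lemma nuGauss_le {a : ℝ} (ha : 0 < a) : nuGauss a ≤ a ^ 2 + 2 := by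
  have hmass : (gaussianReal 0 1).real {z | a ≤ |z|} = 2 * ∫ z in Ioi a, φ z := by
    simpa using setIntegral_le_abs_gaussianReal_eq_two_mul ha (g := fun _ => 1) (fun _ => rfl)
      (by simpa using integrable_gaussianPDFReal 0 1)
  have hsecond : ∫ z in {z | a ≤ |z|}, z ^ 2 ∂gaussianReal 0 1
      = 2 * (a * φ a + ∫ z in Ioi a, φ z) := by
    rw [setIntegral_le_abs_gaussianReal_eq_two_mul ha (fun z => neg_sq z)
      (integrable_pow_mul_gaussianPDFReal_zero_one 2),
      setIntegral_Ioi_sq_mul_gaussianPDFReal_zero_one]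
  have hmills := div_sq_add_one_mul_gaussianPDFReal_zero_one_le a
  have htail : 0 < ∫ z in Ioi a, φ z :=
    lt_of_lt_of_le (by have := gaussianPDFReal_pos 0 1 a one_ne_zero; positivity) hmills
  rw [nuGauss_eq_setAverage, setAverage_eq, smul_eq_mul, hmass, hsecond, ← div_eq_inv_mul,
    div_le_iff₀ (by positivity)]
  rw [div_mul_eq_mul_div, div_le_iff₀ (by positivity)] at hmills
  nlinarith

lemma setIntegral_le_abs_sq_sub_sq_sq_gaussianReal_le {a : ℝ} (ha : 1 ≤ a) :
    ∫ z in {z | a ≤ |z|}, (z ^ 2 - a ^ 2) ^ 2 ∂gaussianReal 0 1 ≤ 8 * exp (-a ^ 2 / 2) := by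
  have ha0 : 0 < a := one_pos.trans_le ha
  rw [setIntegral_le_abs_gaussianReal_eq_two_mul ha0 (fun z => by ring)
      (integrable_sq_sub_sq_sq_mul_gaussianPDFReal_zero_one a),
    setIntegral_Ioi_sq_sub_sq_sq_mul_gaussianPDFReal_zero_one]
  set b := a⁻¹
  have hb : 0 < b := inv_pos.2 ha0
  have hb1 : b ≤ 1 := inv_le_one_of_one_le₀ ha
  have hcoef : 3 * a - a ^ 3 + (a ^ 4 - 2 * a ^ 2 + 3) * (a⁻¹ - (a ^ 3)⁻¹ + 3 * (a ^ 5)⁻¹)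
      = 8 * b - 9 * b ^ 3 + 9 * b ^ 5 := by
    simp only [b]; field_simp; ring
  have hp := gaussianPDFReal_nonneg 0 1 a
  have hmills := mul_le_mul_of_nonneg_left (setIntegral_Ioi_gaussianPDFReal_zero_one_le ha0)
    (by nlinarith [sq_nonneg (a ^ 2 - 1)] : 0 ≤ a ^ 4 - 2 * a ^ 2 + 3)
  have hsqrt : 2 ≤ √(2 * π) := (le_sqrt' two_pos).2 (by nlinarith [pi_gt_three])
  have hφa : φ a = (√(2 * π))⁻¹ * exp (-a ^ 2 / 2) := by rw [gaussianPDFReal_zero_one]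
  have hφa_le : φ a ≤ exp (-a ^ 2 / 2) / 2 := by
    rw [hφa, inv_mul_eq_div]
    exact div_le_div_of_nonneg_left (exp_pos _).le two_pos hsqrt
  nlinarith [mul_le_mul_of_nonneg_right (show 8 * b - 9 * b ^ 3 + 9 * b ^ 5 ≤ 8 by
    nlinarith [pow_le_one₀ hb.le hb1 (n := 2), pow_pos hb 3]) hp]

noncomputable def thresholdedSq (a z : ℝ) : ℝ := if a ≤ |z| then z ^ 2 - nuGauss a else 0

lemma thresholdedSq_eq_indicator (a : ℝ) :
    thresholdedSq a = {z | a ≤ |z|}.indicator fun z => z ^ 2 - nuGauss a := by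
  ext z
  simp [thresholdedSq, indicator]

lemma memLp_sq_gaussianReal : MemLp (fun z : ℝ => z ^ 2) 2 (gaussianReal 0 1) := by
  refine (memLp_two_iff_integrable_sq (by fun_prop)).2 ?_
  convert (memLp_id_gaussianReal (μ := 0) (v := 1) 4).integrable_norm_pow (by norm_num) using 2
  simp [← pow_mul, Even.pow_abs ⟨2, rfl⟩]

lemma memLp_thresholdedSq (a : ℝ) : MemLp (thresholdedSq a) 2 (gaussianReal 0 1) := by
  rw [thresholdedSq_eq_indicator]
  exact (memLp_sq_gaussianReal.sub (memLp_const _)).indicator (measurableSet_le_abs a)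

lemma integral_thresholdedSq_gaussianReal (a : ℝ) :
    ∫ z, thresholdedSq a z ∂gaussianReal 0 1 = 0 := by
  rw [thresholdedSq_eq_indicator, integral_indicator (measurableSet_le_abs a),
    nuGauss_eq_setAverage]
  exact setAverage_sub_setAverage (measure_ne_top _ _) _

lemma integral_thresholdedSq_sq_gaussianReal_le {a : ℝ} (ha : 1 ≤ a) :
    ∫ z, thresholdedSq a z ^ 2 ∂gaussianReal 0 1 ≤ 8 * exp (-a ^ 2 / 2) := by
  have hsq : (fun z => thresholdedSq a z ^ 2)
      = {z | a ≤ |z|}.indicator fun z => (z ^ 2 - nuGauss a) ^ 2 := by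
    ext z
    by_cases hz : a ≤ |z| <;> simp [thresholdedSq, indicator, hz]
  rw [hsq, integral_indicator (measurableSet_le_abs a), nuGauss_eq_setAverage]
  exact (setIntegral_sq_sub_setAverage_le (measure_ne_top _ _)
    (memLp_sq_gaussianReal.restrict _) (a ^ 2)).trans
    (setIntegral_le_abs_sq_sub_sq_sq_gaussianReal_le ha)

lemma neg_mul_thresholdedSq_le_one {a l : ℝ} (ha : 0 < a) (hl0 : 0 ≤ l) (hl : l ≤ 1 / 2)
    (z : ℝ) : -l * thresholdedSq a z ≤ 1 := by
  have hν := nuGauss_le ha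
  unfold thresholdedSq
  split_ifs with hz
  · have : a ^ 2 ≤ z ^ 2 := by
      rw [← sq_abs z]
      exact pow_le_pow_left₀ ha.le hz 2
    nlinarith
  · simp

/-- MGF bound: for a standard Gaussian `Z`, `a ≥ 1`, `X = (Z² − ν_a)·1{|Z| ≥ a}` and any
`λ ∈ (0, 1/2]`, one has `E(e^{−λX}) ≤ exp(6·λ²·e^{−a²/2})`. -/
theorem thresholded_chi_sq_mgf_bound
    {Ω : Type*} [MeasureSpace Ω] [IsProbabilityMeasure (ℙ : Measure Ω)]
    (Z : Ω → ℝ) (hlaw : Measure.map Z ℙ = gaussianReal 0 1)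
    (a : ℝ) (ha : 1 ≤ a) (l : ℝ) (hl0 : 0 < l) (hl : l ≤ 1 / 2) :
    (∫ ω, Real.exp (-l * (if a ≤ |Z ω| then Z ω ^ 2 - nuGauss a else 0)) ∂ℙ)
      ≤ Real.exp (6 * l ^ 2 * Real.exp (-a ^ 2 / 2)) := by
  have hZ : AEMeasurable Z ℙ :=
    .of_map_ne_zero (by rw [hlaw]; exact IsProbabilityMeasure.ne_zero _)
  have hX : MemLp (fun z => -l * thresholdedSq a z) 2 (gaussianReal 0 1) :=
    (memLp_thresholdedSq a).const_mul (-l)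
  calc ∫ ω, exp (-l * thresholdedSq a (Z ω)) ∂ℙ
      = ∫ z, exp (-l * thresholdedSq a z) ∂gaussianReal 0 1 := by
        rw [← hlaw, integral_map hZ (hlaw ▸ continuous_exp.comp_aestronglyMeasurable hX.1)]
    _ ≤ exp (3 / 4 * ∫ z, (-l * thresholdedSq a z) ^ 2 ∂gaussianReal 0 1) :=
        integral_exp_le_exp_integral_sq hX
          (by rw [integral_const_mul, integral_thresholdedSq_gaussianReal, mul_zero])
          (neg_mul_thresholdedSq_le_one (one_pos.trans_le ha) hl0.le hl)
    _ ≤ exp (6 * l ^ 2 * exp (-a ^ 2 / 2)) := by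
        simp_rw [mul_pow, integral_const_mul, neg_sq]
        refine exp_le_exp.2 ?_
        nlinarith [mul_le_mul_of_nonneg_left (integral_thresholdedSq_sq_gaussianReal_le ha)
          (sq_nonneg l)]
end

section
/- Let 𝓜 be the collection of seeded intervals generated with parameters α ∈ (1,2] and K ≥ 2 for sample size n. Then for every real h with 0 < h ≤ n/2 and every integer η with max(3h/2, 1) ≤ η ≤ n − max(3h/2, 1), there exist integers l ≥ 1 and v such that: (v−l, v+l] ∈ 𝓜; h/2 ≤ l ≤ max(h, 1); |v − η| ≤ l/K ≤ l/2; and moreover (v−l, v+l] ⊆ (η − max(3h/2, 1), η + max(3h/2, 1)]. -/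
/-
Take for `l` the largest seeded half-length not exceeding `max h 1`. Since `α ≤ 2` the
half-lengths at most double from one scale to the next, so `l > max h 1 / 2 ≥ h / 2`. At scale
`l` the left endpoints form a grid of step `s = max 1 ⌊l/K⌋`, so some interval `(v-l, v+l]` has
its centre `v` in `(η - s, η]`, i.e. within `⌊l/K⌋ ≤ l/2` of `η`. Then the interval sits inside
`(η - (l + ⌊l/2⌋), η + l]`, and `l + ⌊l/2⌋ ≤ max (3h/2) 1`: for `l = 1` this is `1`, and for
`l ≥ 2` we have `l ≤ h`.
-/

open MeasureTheory ProbabilityTheory Real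
open scoped ENNReal NNReal Classical

/-- The sequence of seeded interval half-lengths: `l_1 = 1`, `l_{j+1} = max(l_j + 1, ⌊α l_j⌋)`
(0-indexed here). -/
noncomputable def seedLens (α : ℝ) : ℕ → ℕ
  | 0 => 1
  | j + 1 => max (seedLens α j + 1) ⌊α * (seedLens α j : ℝ)⌋₊

/-- The collection of seeded intervals (as pairs `(s, e)` denoting the integer interval
`(s, e]`) generated with growth parameter `α` and step parameter `K` for sample size `n`. -/
noncomputable def seededIntervals (n : ℕ) (α : ℝ) (K : ℕ) : Finset (ℕ × ℕ) :=
  ((Finset.range n).filter fun j => 2 * seedLens α j ≤ n).biUnion fun j =>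
    let l := seedLens α j
    let s := max 1 (l / K)
    insert (n - 2 * l, n)
      ((Finset.range ((n - 2 * l) / s + 1)).image fun i => (i * s, i * s + 2 * l))

theorem exists_le_lt_succ {β : Type*} [LinearOrder β] (f : ℕ → β) {x : β} (h0 : f 0 ≤ x)
    (hx : ∃ k, x < f k) : ∃ j, f j ≤ x ∧ x < f (j + 1) := by
  obtain ⟨k, hk⟩ := hx
  by_contra! H
  have hle : ∀ j, f j ≤ x := fun j => Nat.rec h0 (fun j ih => H j ih) j
  exact (hle k).not_gt hk

theorem Nat.exists_add_mul_le_lt {s a x : ℕ} (hs : 0 < s) (hax : a ≤ x) :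
    ∃ i, a + i * s ≤ x ∧ x < a + i * s + s := by
  refine ⟨(x - a) / s, ?_, ?_⟩
  · have := Nat.div_mul_le_self (x - a) s
    omega
  · have := Nat.div_add_mod' (x - a) s
    have := Nat.mod_lt (x - a) hs
    omega

theorem add_one_le_seedLens (α : ℝ) (j : ℕ) : j + 1 ≤ seedLens α j := by
  induction j with
  | zero => simp [seedLens]
  | succ k ih =>
    have : seedLens α k + 1 ≤ seedLens α (k + 1) := le_max_left _ _
    omega

theorem seedLens_succ_le_two_mul {α : ℝ} (hα : α ≤ 2) (j : ℕ) :
    seedLens α (j + 1) ≤ 2 * seedLens α j := by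
  have hfloor : ⌊α * (seedLens α j : ℝ)⌋₊ ≤ 2 * seedLens α j := by
    refine Nat.floor_le_of_le ?_
    push_cast
    exact mul_le_mul_of_nonneg_right hα (Nat.cast_nonneg _)
  have := add_one_le_seedLens α j
  exact max_le (by omega) hfloor

theorem exists_seedLens_le_lt_two_mul {α : ℝ} (hα : α ≤ 2) {T : ℝ} (hT : 1 ≤ T) :
    ∃ j, (seedLens α j : ℝ) ≤ T ∧ T < 2 * seedLens α j := by
  obtain ⟨j, hle, hlt⟩ := exists_le_lt_succ (fun j => (seedLens α j : ℝ))
    (by simpa [seedLens] using hT) ⟨⌈T⌉₊, by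
      have := add_one_le_seedLens α ⌈T⌉₊
      exact (Nat.le_ceil T).trans_lt (by exact_mod_cast this)⟩
  refine ⟨j, hle, hlt.trans_le ?_⟩
  exact_mod_cast seedLens_succ_le_two_mul hα j

theorem mem_seededIntervals {n K j i : ℕ} {α : ℝ} (hj : 2 * seedLens α j ≤ n)
    (hi : i * max 1 (seedLens α j / K) + 2 * seedLens α j ≤ n) :
    (i * max 1 (seedLens α j / K), i * max 1 (seedLens α j / K) + 2 * seedLens α j) ∈
      seededIntervals n α K := by
  have hjn : j < n := by have := add_one_le_seedLens α j; omega
  refine Finset.mem_biUnion.2 ⟨j, Finset.mem_filter.2 ⟨Finset.mem_range.2 hjn, hj⟩, ?_⟩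
  refine Finset.mem_insert_of_mem (Finset.mem_image.2 ⟨i, Finset.mem_range.2 ?_, rfl⟩)
  rw [Nat.lt_succ_iff, Nat.le_div_iff_mul_le (lt_max_of_lt_left one_pos)]
  omega

theorem natCast_add_div_two_le_max {l : ℕ} {h : ℝ} (hl : (l : ℝ) ≤ max h 1) :
    ((l + l / 2 : ℕ) : ℝ) ≤ max (3 * h / 2) 1 := by
  rcases le_or_gt l 1 with hl1 | hl2
  · have : l + l / 2 ≤ 1 := by omega
    exact le_max_of_le_right (by exact_mod_cast this)
  · have hlh : (l : ℝ) ≤ h := by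
      by_contra! hhl
      exact hl.not_gt (max_lt hhl (by exact_mod_cast hl2))
    have hhalf : ((l / 2 : ℕ) : ℝ) ≤ l / 2 := by exact_mod_cast Nat.cast_div_le
    push_cast
    exact le_max_of_le_left (by linarith)

theorem seeded_interval_near_changepoint_general
    (n : ℕ) (α : ℝ) (K : ℕ) (hα2 : α ≤ 2) (hK : 2 ≤ K)
    (h : ℝ)
    (η : ℕ) (hη1 : max (3 * h / 2) 1 ≤ (η : ℝ))
    (hη2 : (η : ℝ) ≤ (n : ℝ) - max (3 * h / 2) 1) :
    ∃ l v : ℕ, 1 ≤ l ∧ l ≤ v ∧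
      (v - l, v + l) ∈ seededIntervals n α K ∧
      h / 2 ≤ (l : ℝ) ∧ (l : ℝ) ≤ max h 1 ∧
      |(v : ℝ) - (η : ℝ)| ≤ (l : ℝ) / (K : ℝ) ∧ (l : ℝ) / (K : ℝ) ≤ (l : ℝ) / 2 ∧
      (η : ℝ) - max (3 * h / 2) 1 ≤ (v : ℝ) - (l : ℝ) ∧
      (v : ℝ) + (l : ℝ) ≤ (η : ℝ) + max (3 * h / 2) 1 := by
  obtain ⟨j, hlT, hTl⟩ := exists_seedLens_le_lt_two_mul hα2 (le_max_right h 1)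
  set l := seedLens α j
  set s := max 1 (l / K)
  have hl1 : 1 ≤ l := by have := add_one_le_seedLens α j; omega
  have hlK : l / K ≤ l / 2 := Nat.div_le_div_left hK two_pos
  have hM := natCast_add_div_two_le_max hlT
  have hlM : (l : ℝ) ≤ max (3 * h / 2) 1 := le_trans (by exact_mod_cast l.le_add_right _) hM
  have hlη : l ≤ η := Nat.cast_le.1 (hlM.trans hη1)
  have hηn : η + l ≤ n := by exact_mod_cast (by linarith : (η : ℝ) + l ≤ n)
  obtain ⟨i, hvη, hηv⟩ := Nat.exists_add_mul_le_lt (lt_max_of_lt_left one_pos : 0 < s) hlη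
  set v := l + i * s
  have hs : s ≤ l / K + 1 := max_le (Nat.le_add_left _ _) (Nat.le_succ _)
  have hmem : (v - l, v + l) ∈ seededIntervals n α K := by
    rw [show (v - l, v + l) = (i * s, i * s + 2 * l) from Prod.ext (by omega) (by omega)]
    exact mem_seededIntervals (by omega : 2 * l ≤ n) (by omega : i * s + 2 * l ≤ n)
  have hvR : (v : ℝ) ≤ η := by exact_mod_cast hvη
  have hηR : (η : ℝ) ≤ v + ((l / K : ℕ) : ℝ) := by exact_mod_cast (by omega : η ≤ v + l / K)
  have hηlR : (η : ℝ) + l ≤ v + ((l + l / 2 : ℕ) : ℝ) := by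
    exact_mod_cast (by omega : η + l ≤ v + (l + l / 2))
  have hlKR : ((l / K : ℕ) : ℝ) ≤ (l : ℝ) / K := Nat.cast_div_le
  have hKR : (l : ℝ) / K ≤ l / 2 :=
    div_le_div_of_nonneg_left l.cast_nonneg two_pos (by exact_mod_cast hK)
  refine ⟨l, v, hl1, by omega, hmem, by linarith [le_max_left h 1], hlT,
    abs_le.2 ⟨by linarith, by linarith⟩, hKR, by linarith, by linarith⟩

/-- For seeded intervals generated with `α ∈ (1, 2]` and `K ≥ 2`: for every real `0 < h ≤ n/2`
and every integer `η` with `max(3h/2, 1) ≤ η ≤ n − max(3h/2, 1)`, there exist integers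
`l ≥ 1` and `v` such that `(v−l, v+l] ∈ 𝓜`, `h/2 ≤ l ≤ max(h, 1)`, `|v − η| ≤ l/K ≤ l/2`, and
`(v−l, v+l] ⊆ (η − max(3h/2, 1), η + max(3h/2, 1)]`. -/
theorem seeded_interval_near_changepoint
    (n : ℕ) (α : ℝ) (K : ℕ) (hα1 : 1 < α) (hα2 : α ≤ 2) (hK : 2 ≤ K)
    (h : ℝ) (hh0 : 0 < h) (hhn : h ≤ (n : ℝ) / 2)
    (η : ℕ) (hη1 : max (3 * h / 2) 1 ≤ (η : ℝ))
    (hη2 : (η : ℝ) ≤ (n : ℝ) - max (3 * h / 2) 1) :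
    ∃ l v : ℕ, 1 ≤ l ∧ l ≤ v ∧
      (v - l, v + l) ∈ seededIntervals n α K ∧
      h / 2 ≤ (l : ℝ) ∧ (l : ℝ) ≤ max h 1 ∧
      |(v : ℝ) - (η : ℝ)| ≤ (l : ℝ) / (K : ℝ) ∧ (l : ℝ) / (K : ℝ) ≤ (l : ℝ) / 2 ∧
      (η : ℝ) - max (3 * h / 2) 1 ≤ (v : ℝ) - (l : ℝ) ∧
      (v : ℝ) + (l : ℝ) ≤ (η : ℝ) + max (3 * h / 2) 1 :=
  seeded_interval_near_changepoint_general n α K hα2 hK h η hη1 hη2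
end

section
/- Let a > 0 and ν_a = E(Z² | |Z| ≥ a) for a standard Gaussian Z, and for θ ∈ ℝ let Y_θ ~ N(θ, 1). Define A_θ = (Y_θ² − ν_a)·1{|Y_θ| ≥ a} and B_θ = Y_θ² − 1. Then A_θ − B_θ is stochastically decreasing in |θ|: for all θ₁, θ₂ ∈ ℝ with |θ₁| ≤ |θ₂| and all real u, P(A_{θ₂} − B_{θ₂} > u) ≤ P(A_{θ₁} − B_{θ₁} > u). -/
/-!
On `|y| ≥ a` the difference `A − B` is the constant `1 − ν_a`, and on `|y| < a` it is `1 − y²`,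
which exceeds `1 − a² ≥ 1 − ν_a`. Hence the event `{A − B > u}` is either all of `ℝ` (when
`u < 1 − ν_a`) or the symmetric interval `|y| < min a √(1 − u)`. The `N(θ, 1)`-mass of a fixed
interval `(-c, c)` is `Φ(c − θ) − Φ(-c − θ)`, whose derivative `φ(-c − θ) − φ(c − θ)` is `≤ 0`
for `θ ≥ 0`, and which is even in `θ`.
-/

open MeasureTheory ProbabilityTheory Real
open scoped ENNReal NNReal Classical

lemma sq_le_nuGauss {a : ℝ} (ha : 0 ≤ a) : a ^ 2 ≤ nuGauss a := by
  set S := {z : ℝ | a ≤ |z|}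
  have hS : MeasurableSet S := measurableSet_le measurable_const measurable_abs
  have hS_volume : volume S ≠ 0 := by
    have hIci : Set.Ici a ⊆ S := fun z (hz : a ≤ z) => hz.trans (le_abs_self z)
    refine (lt_of_lt_of_le ?_ (measure_mono hIci)).ne'
    rw [Real.volume_Ici]
    exact ENNReal.zero_lt_top
  have hS_pos : 0 < (gaussianReal 0 1 S).toReal :=
    ENNReal.toReal_pos (fun h => hS_volume (gaussianReal_absolutelyContinuous' 0 one_ne_zero h))
      (measure_ne_top _ _)
  rw [nuGauss, le_div_iff₀ hS_pos]
  refine setIntegral_ge_of_const_le_real hS (measure_ne_top _ _) (fun z (hz : a ≤ |z|) => ?_)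
    (memLp_id_gaussianReal 2).integrable_sq.integrableOn
  simpa only [sq_abs] using pow_le_pow_left₀ ha hz 2

section ThresholdEvent

variable {a ν u : ℝ}

lemma setOf_lt_threshold_sub_eq_univ (hν : a ^ 2 ≤ ν) (hu : u < 1 - ν) :
    {y : ℝ | u < (if a ≤ |y| then y ^ 2 - ν else 0) - (y ^ 2 - 1)} = Set.univ := by
  refine Set.eq_univ_of_forall fun y => show u < _ from ?_
  split_ifs with hy
  · linarith
  · have : y ^ 2 < a ^ 2 := by
      simpa only [sq_abs] using pow_lt_pow_left₀ (not_le.1 hy) (abs_nonneg y) two_ne_zero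
    linarith

lemma setOf_lt_threshold_sub_eq_abs_lt (hu : 1 - ν ≤ u) :
    {y : ℝ | u < (if a ≤ |y| then y ^ 2 - ν else 0) - (y ^ 2 - 1)} =
      {y : ℝ | |y| < min a √(1 - u)} := by
  ext y
  simp only [Set.mem_ofPred_eq, lt_min_iff, lt_sqrt (abs_nonneg y), sq_abs]
  split_ifs with hy
  · constructor
    · exact fun h => by linarith
    · exact fun h => absurd hy (not_le.2 h.1)
  · constructor
    · exact fun h => ⟨not_le.1 hy, by linarith⟩
    · exact fun h => by linarith [h.2]

end ThresholdEvent

section GaussianSymmetricInterval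

variable {v : ℝ≥0} {c : ℝ}

lemma continuous_gaussianPDFReal (μ : ℝ) (v : ℝ≥0) : Continuous (gaussianPDFReal μ v) := by
  unfold gaussianPDFReal
  fun_prop

lemma gaussianPDFReal_le_of_abs_sub_le {μ x y : ℝ} (h : |y - μ| ≤ |x - μ|) :
    gaussianPDFReal μ v x ≤ gaussianPDFReal μ v y := by
  unfold gaussianPDFReal
  refine mul_le_mul_of_nonneg_left (exp_le_exp.2 ?_) (by positivity)
  exact div_le_div_of_nonneg_right (neg_le_neg (sq_le_sq.2 h)) (by positivity)

lemma gaussianReal_neg_apply_abs_lt (μ : ℝ) :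
    gaussianReal (-μ) v {y | |y| < c} = gaussianReal μ v {y | |y| < c} := by
  rw [← gaussianReal_map_neg, Measure.map_apply measurable_neg
    (measurableSet_lt measurable_abs measurable_const)]
  simp only [Set.preimage_ofPred_eq, abs_neg]

lemma gaussianReal_abs_apply_abs_lt (μ : ℝ) :
    gaussianReal |μ| v {y | |y| < c} = gaussianReal μ v {y | |y| < c} := by
  rcases abs_choice μ with h | h <;> rw [h]
  exact gaussianReal_neg_apply_abs_lt μ

lemma gaussianReal_apply_abs_lt (hv : v ≠ 0) (hc : 0 ≤ c) (μ : ℝ) :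
    gaussianReal μ v {y | |y| < c} =
      ENNReal.ofReal (∫ x in (-c - μ)..(c - μ), gaussianPDFReal 0 v x) := by
  have hS : {y : ℝ | |y| < c} = Set.Ioo (-c) c := by
    ext y; simp only [Set.mem_ofPred_eq, Set.mem_Ioo, abs_lt]
  rw [hS, gaussianReal_apply_eq_integral _ hv, ← integral_Ioc_eq_integral_Ioo,
    ← intervalIntegral.integral_of_le (neg_le_self hc), ← intervalIntegral.integral_comp_sub_right]
  simp only [gaussianPDFReal_sub, zero_add]

lemma hasDerivAt_integral_gaussianPDFReal_symm (v : ℝ≥0) (c μ : ℝ) :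
    HasDerivAt (fun μ => ∫ x in (-c - μ)..(c - μ), gaussianPDFReal 0 v x)
      (gaussianPDFReal 0 v (-c - μ) - gaussianPDFReal 0 v (c - μ)) μ := by
  have hf := continuous_gaussianPDFReal 0 v
  have hF : ∀ b, HasDerivAt (fun μ => ∫ x in (0 : ℝ)..(b - μ), gaussianPDFReal 0 v x)
      (-gaussianPDFReal 0 v (b - μ)) μ := fun b =>
    (hf.integral_hasStrictDerivAt 0 (b - μ)).hasDerivAt.comp_const_sub b μ
  refine ((hF c).sub (hF (-c))).congr_of_eventuallyEq (Filter.Eventually.of_forall fun μ => ?_)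
    |>.congr_deriv (by ring)
  exact (intervalIntegral.integral_interval_sub_left (hf.intervalIntegrable _ _)
    (hf.intervalIntegrable _ _)).symm

lemma antitoneOn_gaussianReal_apply_abs_lt (hv : v ≠ 0) (hc : 0 ≤ c) :
    AntitoneOn (fun μ => gaussianReal μ v {y | |y| < c}) (Set.Ici 0) := by
  simp only [gaussianReal_apply_abs_lt hv hc]
  refine fun μ₁ hμ₁ μ₂ hμ₂ h => ENNReal.ofReal_le_ofReal ?_
  refine antitoneOn_of_hasDerivWithinAt_nonpos (convex_Ici 0)
    (fun μ _ => (hasDerivAt_integral_gaussianPDFReal_symm v c μ).continuousAt.continuousWithinAt)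
    (fun μ _ => (hasDerivAt_integral_gaussianPDFReal_symm v c μ).hasDerivWithinAt)
    (fun μ hμ => ?_) hμ₁ hμ₂ h
  rw [interior_Ici, Set.mem_Ioi] at hμ
  refine sub_nonpos.2 (gaussianPDFReal_le_of_abs_sub_le ?_)
  rw [sub_zero, sub_zero, abs_le, abs_eq_neg_self.2 (by linarith)]
  constructor <;> linarith

end GaussianSymmetricInterval

/-- For `Y_θ ~ N(θ, 1)`, `A_θ = (Y_θ² − ν_a)·1{|Y_θ| ≥ a}` and `B_θ = Y_θ² − 1`, the difference
`A_θ − B_θ` is stochastically decreasing in `|θ|`: if `|θ₁| ≤ |θ₂|`, then for all `u ∈ ℝ`,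
`P(A_{θ₂} − B_{θ₂} > u) ≤ P(A_{θ₁} − B_{θ₁} > u)`. -/
theorem thresholding_correction_stochastically_decreasing
    (a : ℝ) (ha : 0 < a) (θ₁ θ₂ : ℝ) (hθ : |θ₁| ≤ |θ₂|) (u : ℝ) :
    (gaussianReal θ₂ 1)
        {y : ℝ | u < (if a ≤ |y| then y ^ 2 - nuGauss a else 0) - (y ^ 2 - 1)}
      ≤ (gaussianReal θ₁ 1)
        {y : ℝ | u < (if a ≤ |y| then y ^ 2 - nuGauss a else 0) - (y ^ 2 - 1)} := by
  rcases lt_or_ge u (1 - nuGauss a) with hu | hu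
  · rw [setOf_lt_threshold_sub_eq_univ (sq_le_nuGauss ha.le) hu, measure_univ, measure_univ]
  · rw [setOf_lt_threshold_sub_eq_abs_lt hu, ← gaussianReal_abs_apply_abs_lt θ₁,
      ← gaussianReal_abs_apply_abs_lt θ₂]
    exact antitoneOn_gaussianReal_apply_abs_lt one_ne_zero (le_min ha.le (sqrt_nonneg _))
      (abs_nonneg θ₁) (abs_nonneg θ₂) hθ
end

section
/- Let μ ∈ ℝ^n be a vector with exactly one changepoint η_j in the open integer interval (s,e), where 0 ≤ s < η_j < e ≤ n (i.e. μ is constant on {s+1,…,η_j} and on {η_j+1,…,e}), with jump θ_j = μ_{η_j+1} − μ_{η_j}. Fix an integer v with s < v < e and set ρ = |η_j − v|, δ_L = η_j − s, δ_R = e − η_j. Then: (i) ‖ Ψ^{η_j}_{(s,e]}·T^{η_j}_{(s,e]}(μ) − Ψ^v_{(s,e]}·T^v_{(s,e]}(μ) ‖₂² = T^{η_j}_{(s,e]}(μ)² − T^v_{(s,e]}(μ)²; (ii) if η_j ≤ v < e then T^{η_j}_{(s,e]}(μ)² − T^v_{(s,e]}(μ)² = (ρ·δ_L/(ρ + δ_L))·θ_j²;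 and (iii) if s < v ≤ η_j then T^{η_j}_{(s,e]}(μ)² − T^v_{(s,e]}(μ)² = (ρ·δ_R/(ρ + δ_R))·θ_j². -/
/-!
On `(s, e]` the signal `μ` takes one value up to `η` and another after it, exactly like `Ψ^η`, so
`μ` is an affine function `c + d Ψ^η` there. Every contrast `Ψ^v` is a unit vector orthogonal to
the constants, hence `T^v(μ) = ⟨μ, Ψ^v⟩ = T^η(μ) ⟨Ψ^η, Ψ^v⟩`; expanding the square then gives
`‖Ψ^η T^η(μ) − Ψ^v T^v(μ)‖² = T^η(μ)² − T^v(μ)²`. For (ii) and (iii) the square roots disappear in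
`T^v(y)² = ((e − v) Σ_{(s,v]} y − (v − s) Σ_{(v,e]} y)² / ((e − s)(v − s)(e − v))`, into which the
two constant pieces of `μ` are substituted.
-/

open MeasureTheory ProbabilityTheory Real
open scoped ENNReal NNReal Classical

/-- The CUSUM transform `T^v_{(s,e]}(y)`. -/
noncomputable def cusum (s v e : ℕ) (y : ℕ → ℝ) : ℝ :=
  Real.sqrt (((e : ℝ) - v) / (((e : ℝ) - s) * ((v : ℝ) - s))) * ∑ t ∈ Finset.Ioc s v, y t -
  Real.sqrt (((v : ℝ) - s) / (((e : ℝ) - s) * ((e : ℝ) - v))) * ∑ t ∈ Finset.Ioc v e, y t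

/-- The CUSUM contrast vector `Ψ^v_{(s,e]}`, so that `T^v_{(s,e]}(y) = ⟨y, Ψ^v_{(s,e]}⟩`. -/
noncomputable def cusumVec (s v e : ℕ) : ℕ → ℝ := fun l =>
  if s < l ∧ l ≤ v then Real.sqrt (((e : ℝ) - v) / (((e : ℝ) - s) * ((v : ℝ) - s)))
  else if v < l ∧ l ≤ e then -Real.sqrt (((v : ℝ) - s) / (((e : ℝ) - s) * ((e : ℝ) - v)))
  else 0

open Finset

section InnerProduct

variable {ι : Type*} (I : Finset ι) {ψ φ y : ι → ℝ}

theorem sum_mul_eq_of_affine (hψ0 : ∑ i ∈ I, ψ i = 0) (hφ0 : ∑ i ∈ I, φ i = 0)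
    (hψ : ∑ i ∈ I, ψ i ^ 2 = 1) {c d : ℝ} (hy : ∀ i ∈ I, y i = c + d * ψ i) :
    ∑ i ∈ I, y i * φ i = (∑ i ∈ I, y i * ψ i) * ∑ i ∈ I, ψ i * φ i := by
  have hyφ : ∑ i ∈ I, y i * φ i = c * ∑ i ∈ I, φ i + d * ∑ i ∈ I, ψ i * φ i := by
    rw [mul_sum, mul_sum, ← sum_add_distrib]
    exact sum_congr rfl fun i hi => by rw [hy i hi]; ring
  have hyψ : ∑ i ∈ I, y i * ψ i = c * ∑ i ∈ I, ψ i + d * ∑ i ∈ I, ψ i ^ 2 := by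
    rw [mul_sum, mul_sum, ← sum_add_distrib]
    exact sum_congr rfl fun i hi => by rw [hy i hi]; ring
  rw [hyφ, hyψ, hψ0, hφ0, hψ]
  ring

theorem sum_sq_sub_eq_of_eq_mul_sum (hψ : ∑ i ∈ I, ψ i ^ 2 = 1) (hφ : ∑ i ∈ I, φ i ^ 2 = 1)
    {a b : ℝ} (hb : b = a * ∑ i ∈ I, ψ i * φ i) :
    ∑ i ∈ I, (ψ i * a - φ i * b) ^ 2 = a ^ 2 - b ^ 2 := by
  have hexpand : ∑ i ∈ I, (ψ i * a - φ i * b) ^ 2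
      = a ^ 2 * ∑ i ∈ I, ψ i ^ 2 - 2 * a * b * ∑ i ∈ I, ψ i * φ i
        + b ^ 2 * ∑ i ∈ I, φ i ^ 2 := by
    simp only [mul_sum, ← sum_sub_distrib, ← sum_add_distrib]
    exact sum_congr rfl fun i _ => by ring
  rw [hexpand, hψ, hφ, hb]
  ring

end InnerProduct

section Weights

variable {s v e : ℝ}

theorem cusum_weights_balance (hsv : s < v) (hve : v < e) :
    (v - s) * √((e - v) / ((e - s) * (v - s)))
      = (e - v) * √((v - s) / ((e - s) * (e - v))) := by
  have hvs : 0 < v - s := sub_pos.2 hsv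
  have hev : 0 < e - v := sub_pos.2 hve
  have hes : 0 < e - s := by linarith
  rw [← sq_eq_sq₀ (by positivity) (by positivity), mul_pow, mul_pow,
    sq_sqrt (by positivity), sq_sqrt (by positivity)]
  field_simp

theorem cusum_weights_sq_sum (hsv : s < v) (hve : v < e) :
    (v - s) * √((e - v) / ((e - s) * (v - s))) ^ 2
      + (e - v) * √((v - s) / ((e - s) * (e - v))) ^ 2 = 1 := by
  have hvs : 0 < v - s := sub_pos.2 hsv
  have hev : 0 < e - v := sub_pos.2 hve
  have hes : 0 < e - s := by linarith
  rw [sq_sqrt (by positivity), sq_sqrt (by positivity)]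
  field_simp
  ring

end Weights

theorem sum_Ioc_eq_sub_mul_of_forall_eq {a b : ℕ} {g : ℕ → ℝ} {c : ℝ} (hab : a ≤ b)
    (h : ∀ t, a < t → t ≤ b → g t = c) :
    ∑ t ∈ Ioc a b, g t = ((b : ℝ) - a) * c := by
  rw [sum_congr rfl fun t ht => h t (mem_Ioc.1 ht).1 (mem_Ioc.1 ht).2, sum_const,
    Nat.card_Ioc, nsmul_eq_mul, Nat.cast_sub hab]

section CusumVec

variable {s v e : ℕ}

theorem cusumVec_of_le {l : ℕ} (hsl : s < l) (hlv : l ≤ v) :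
    cusumVec s v e l = √(((e : ℝ) - v) / (((e : ℝ) - s) * ((v : ℝ) - s))) :=
  if_pos ⟨hsl, hlv⟩

theorem cusumVec_of_lt {l : ℕ} (hvl : v < l) (hle : l ≤ e) :
    cusumVec s v e l = -√(((v : ℝ) - s) / (((e : ℝ) - s) * ((e : ℝ) - v))) := by
  rw [cusumVec, if_neg (by omega), if_pos ⟨hvl, hle⟩]

theorem cusumVec_eq_zero_of_notMem {l : ℕ} (hsv : s ≤ v) (hve : v ≤ e) (h : l ∉ Ioc s e) :
    cusumVec s v e l = 0 := by
  rw [mem_Ioc] at h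
  rw [cusumVec, if_neg (by omega), if_neg (by omega)]

theorem sum_comp_cusumVec (F : ℝ → ℝ) (hsv : s ≤ v) (hve : v ≤ e) :
    ∑ l ∈ Ioc s e, F (cusumVec s v e l)
      = ((v : ℝ) - s) * F √(((e : ℝ) - v) / (((e : ℝ) - s) * ((v : ℝ) - s)))
        + ((e : ℝ) - v) * F (-√(((v : ℝ) - s) / (((e : ℝ) - s) * ((e : ℝ) - v)))) := by
  rw [← sum_Ioc_consecutive _ hsv hve,
    sum_Ioc_eq_sub_mul_of_forall_eq hsv fun l h1 h2 => by rw [cusumVec_of_le h1 h2],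
    sum_Ioc_eq_sub_mul_of_forall_eq hve fun l h1 h2 => by rw [cusumVec_of_lt h1 h2]]

theorem sum_cusumVec (hsv : s < v) (hve : v < e) : ∑ l ∈ Ioc s e, cusumVec s v e l = 0 := by
  rw [sum_comp_cusumVec (fun x => x) hsv.le hve.le,
    cusum_weights_balance (Nat.cast_lt.2 hsv) (Nat.cast_lt.2 hve)]
  ring

theorem sum_cusumVec_sq (hsv : s < v) (hve : v < e) :
    ∑ l ∈ Ioc s e, cusumVec s v e l ^ 2 = 1 := by
  rw [sum_comp_cusumVec (· ^ 2) hsv.le hve.le, neg_sq]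
  exact cusum_weights_sq_sum (Nat.cast_lt.2 hsv) (Nat.cast_lt.2 hve)

theorem sum_mul_cusumVec (y : ℕ → ℝ) (hsv : s ≤ v) (hve : v ≤ e) :
    ∑ l ∈ Ioc s e, y l * cusumVec s v e l = cusum s v e y := by
  have hleft : ∑ l ∈ Ioc s v, y l * cusumVec s v e l
      = √(((e : ℝ) - v) / (((e : ℝ) - s) * ((v : ℝ) - s))) * ∑ l ∈ Ioc s v, y l := by
    rw [mul_sum]
    exact sum_congr rfl fun l hl => by
      rw [cusumVec_of_le (mem_Ioc.1 hl).1 (mem_Ioc.1 hl).2, mul_comm]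
  have hright : ∑ l ∈ Ioc v e, y l * cusumVec s v e l
      = -(√(((v : ℝ) - s) / (((e : ℝ) - s) * ((e : ℝ) - v))) * ∑ l ∈ Ioc v e, y l) := by
    rw [mul_sum, ← sum_neg_distrib]
    exact sum_congr rfl fun l hl => by
      rw [cusumVec_of_lt (mem_Ioc.1 hl).1 (mem_Ioc.1 hl).2]; ring
  rw [← sum_Ioc_consecutive _ hsv hve, hleft, hright, cusum]
  ring

theorem sq_cusum (y : ℕ → ℝ) (hsv : s < v) (hve : v < e) :
    cusum s v e y ^ 2
      = (((e : ℝ) - v) * ∑ t ∈ Ioc s v, y t - ((v : ℝ) - s) * ∑ t ∈ Ioc v e, y t) ^ 2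
        / (((e : ℝ) - s) * ((v : ℝ) - s) * ((e : ℝ) - v)) := by
  have hsv' : (s : ℝ) < v := Nat.cast_lt.2 hsv
  have hve' : (v : ℝ) < e := Nat.cast_lt.2 hve
  have hvs : 0 < (v : ℝ) - s := sub_pos.2 hsv'
  have hev : 0 < (e : ℝ) - v := sub_pos.2 hve'
  have hes : 0 < (e : ℝ) - s := by linarith
  have hright : √(((v : ℝ) - s) / (((e : ℝ) - s) * ((e : ℝ) - v)))
      = ((v : ℝ) - s) / ((e : ℝ) - v) * √(((e : ℝ) - v) / (((e : ℝ) - s) * ((v : ℝ) - s))) := by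
    rw [div_mul_eq_mul_div, cusum_weights_balance hsv' hve']
    field_simp
  have hfactor : ∀ a b c r : ℝ, (a * b - r * a * c) ^ 2 = a ^ 2 * (b - r * c) ^ 2 := by
    intros; ring
  rw [cusum, hright, hfactor, sq_sqrt (by positivity)]
  field_simp

end CusumVec

section Changepoint

variable {μ : ℕ → ℝ} {s e η : ℕ}

theorem exists_affine_cusumVec (hsη : s < η) (hηe : η < e)
    (hL : ∀ t, s < t → t ≤ η → μ t = μ η) (hR : ∀ t, η < t → t ≤ e → μ t = μ (η + 1)) :
    ∃ c d : ℝ, ∀ l ∈ Ioc s e, μ l = c + d * cusumVec s η e l := by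
  set a := √(((e : ℝ) - η) / (((e : ℝ) - s) * ((η : ℝ) - s)))
  set b := √(((η : ℝ) - s) / (((e : ℝ) - s) * ((e : ℝ) - η)))
  have hab : 0 < a + b := by
    have hsη' : (s : ℝ) < η := Nat.cast_lt.2 hsη
    have hηe' : (η : ℝ) < e := Nat.cast_lt.2 hηe
    have ha : 0 < a := sqrt_pos.2 (div_pos (by linarith) (by nlinarith))
    positivity
  refine ⟨μ η - (μ η - μ (η + 1)) / (a + b) * a, (μ η - μ (η + 1)) / (a + b), fun l hl => ?_⟩
  obtain ⟨hsl, hle⟩ := mem_Ioc.1 hl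
  rcases le_or_gt l η with hlη | hηl
  · rw [cusumVec_of_le hsl hlη, hL l hsl hlη]
    ring
  · rw [cusumVec_of_lt hηl hle, hR l hηl hle]
    field_simp
    ring

theorem sq_cusum_of_changepoint_le {v : ℕ} (hsη : s < η) (hηv : η ≤ v) (hve : v < e)
    (hL : ∀ t, s < t → t ≤ η → μ t = μ η) (hR : ∀ t, η < t → t ≤ e → μ t = μ (η + 1)) :
    cusum s v e μ ^ 2
      = ((e : ℝ) - v) * ((η : ℝ) - s) ^ 2 / (((e : ℝ) - s) * ((v : ℝ) - s))
        * (μ (η + 1) - μ η) ^ 2 := by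
  have hsη' : (s : ℝ) < η := Nat.cast_lt.2 hsη
  have hηv' : (η : ℝ) ≤ v := Nat.cast_le.2 hηv
  have hve' : (v : ℝ) < e := Nat.cast_lt.2 hve
  have hvs : (v : ℝ) - s ≠ 0 := by linarith
  have hev : (e : ℝ) - v ≠ 0 := by linarith
  have hes : (e : ℝ) - s ≠ 0 := by linarith
  rw [sq_cusum μ (hsη.trans_le hηv) hve, ← sum_Ioc_consecutive _ hsη.le hηv,
    sum_Ioc_eq_sub_mul_of_forall_eq hsη.le hL,
    sum_Ioc_eq_sub_mul_of_forall_eq hηv fun t h1 h2 => hR t h1 (h2.trans hve.le),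
    sum_Ioc_eq_sub_mul_of_forall_eq hve.le fun t h1 h2 => hR t (hηv.trans_lt h1) h2]
  field_simp
  ring

theorem sq_cusum_of_le_changepoint {v : ℕ} (hsv : s < v) (hvη : v ≤ η) (hηe : η < e)
    (hL : ∀ t, s < t → t ≤ η → μ t = μ η) (hR : ∀ t, η < t → t ≤ e → μ t = μ (η + 1)) :
    cusum s v e μ ^ 2
      = ((v : ℝ) - s) * ((e : ℝ) - η) ^ 2 / (((e : ℝ) - s) * ((e : ℝ) - v))
        * (μ (η + 1) - μ η) ^ 2 := by
  have hsv' : (s : ℝ) < v := Nat.cast_lt.2 hsv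
  have hvη' : (v : ℝ) ≤ η := Nat.cast_le.2 hvη
  have hηe' : (η : ℝ) < e := Nat.cast_lt.2 hηe
  have hvs : (v : ℝ) - s ≠ 0 := by linarith
  have hev : (e : ℝ) - v ≠ 0 := by linarith
  have hes : (e : ℝ) - s ≠ 0 := by linarith
  rw [sq_cusum μ hsv (hvη.trans_lt hηe), ← sum_Ioc_consecutive _ hvη hηe.le,
    sum_Ioc_eq_sub_mul_of_forall_eq hsv.le fun t h1 h2 => hL t h1 (h2.trans hvη),
    sum_Ioc_eq_sub_mul_of_forall_eq hvη fun t h1 h2 => hL t (hsv.trans h1) h2,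
    sum_Ioc_eq_sub_mul_of_forall_eq hηe.le hR]
  field_simp
  ring

end Changepoint

theorem cusum_single_changepoint_general
    (n : ℕ) (μ : ℕ → ℝ) (s e η v : ℕ)
    (hsη : s < η) (hηe : η < e) (hen : e ≤ n)
    (hconstL : ∀ t, s < t → t ≤ η → μ t = μ η)
    (hconstR : ∀ t, η < t → t ≤ e → μ t = μ (η + 1))
    (hsv : s < v) (hve : v < e) :
    (∑ l ∈ Finset.Icc 1 n,
        (cusumVec s η e l * cusum s η e μ - cusumVec s v e l * cusum s v e μ) ^ 2
      = cusum s η e μ ^ 2 - cusum s v e μ ^ 2) ∧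
    (η ≤ v →
      cusum s η e μ ^ 2 - cusum s v e μ ^ 2
        = (|(η : ℝ) - v| * ((η : ℝ) - s)) / (|(η : ℝ) - v| + ((η : ℝ) - s))
            * (μ (η + 1) - μ η) ^ 2) ∧
    (v ≤ η →
      cusum s η e μ ^ 2 - cusum s v e μ ^ 2
        = (|(η : ℝ) - v| * ((e : ℝ) - η)) / (|(η : ℝ) - v| + ((e : ℝ) - η))
            * (μ (η + 1) - μ η) ^ 2) := by
  have hsη' : (s : ℝ) < η := Nat.cast_lt.2 hsη
  have hηe' : (η : ℝ) < e := Nat.cast_lt.2 hηe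
  have hsv' : (s : ℝ) < v := Nat.cast_lt.2 hsv
  have hve' : (v : ℝ) < e := Nat.cast_lt.2 hve
  have hes : (e : ℝ) - s ≠ 0 := by linarith
  have hηs : (η : ℝ) - s ≠ 0 := by linarith
  have hTη := sq_cusum_of_changepoint_le hsη le_rfl hηe hconstL hconstR
  refine ⟨?_, fun hηv => ?_, fun hvη => ?_⟩
  · have hsub : Ioc s e ⊆ Icc 1 n := fun l hl => by
      rw [mem_Ioc] at hl; rw [mem_Icc]; omega
    rw [← sum_subset hsub fun l _ hl => by
      rw [cusumVec_eq_zero_of_notMem hsη.le hηe.le hl,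
        cusumVec_eq_zero_of_notMem hsv.le hve.le hl]; ring]
    obtain ⟨c, d, hμ⟩ := exists_affine_cusumVec hsη hηe hconstL hconstR
    refine sum_sq_sub_eq_of_eq_mul_sum _ (sum_cusumVec_sq hsη hηe) (sum_cusumVec_sq hsv hve) ?_
    rw [← sum_mul_cusumVec μ hsη.le hηe.le, ← sum_mul_cusumVec μ hsv.le hve.le]
    exact sum_mul_eq_of_affine _ (sum_cusumVec hsη hηe) (sum_cusumVec hsv hve)
      (sum_cusumVec_sq hsη hηe) hμ
  · have hηv' : (η : ℝ) ≤ v := Nat.cast_le.2 hηv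
    have hvs : (v : ℝ) - s ≠ 0 := by linarith
    rw [hTη, sq_cusum_of_changepoint_le hsη hηv hve hconstL hconstR, abs_sub_comm,
      abs_of_nonneg (by linarith), show (v : ℝ) - η + (η - s) = v - s by ring]
    field_simp
    ring
  · have hvη' : (v : ℝ) ≤ η := Nat.cast_le.2 hvη
    have hev : (e : ℝ) - v ≠ 0 := by linarith
    rw [hTη, sq_cusum_of_le_changepoint hsv hvη hηe hconstL hconstR,
      abs_of_nonneg (by linarith), show (η : ℝ) - v + (e - η) = e - v by ring]
    field_simp
    ring

/-- Properties of CUSUMs of a vector `μ ∈ ℝⁿ` with exactly one changepoint `η` in the open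
integer interval `(s, e)`, with jump `θ = μ_{η+1} − μ_η`, evaluated at a position `s < v < e`:
(i) `‖Ψ^η·T^η(μ) − Ψ^v·T^v(μ)‖₂² = T^η(μ)² − T^v(μ)²`;
(ii) if `η ≤ v < e` then `T^η(μ)² − T^v(μ)² = (ρδ_L/(ρ + δ_L))·θ²` with `ρ = |η − v|`,
`δ_L = η − s`; (iii) if `s < v ≤ η` then `T^η(μ)² − T^v(μ)² = (ρδ_R/(ρ + δ_R))·θ²` with
`δ_R = e − η`. -/
theorem cusum_single_changepoint
    (n : ℕ) (μ : ℕ → ℝ) (s e η v : ℕ)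
    (hsη : s < η) (hηe : η < e) (hen : e ≤ n)
    (hconstL : ∀ t, s < t → t ≤ η → μ t = μ η)
    (hconstR : ∀ t, η < t → t ≤ e → μ t = μ (η + 1))
    (hjump : μ (η + 1) ≠ μ η)
    (hsv : s < v) (hve : v < e) :
    (∑ l ∈ Finset.Icc 1 n,
        (cusumVec s η e l * cusum s η e μ - cusumVec s v e l * cusum s v e μ) ^ 2
      = cusum s η e μ ^ 2 - cusum s v e μ ^ 2) ∧
    (η ≤ v →
      cusum s η e μ ^ 2 - cusum s v e μ ^ 2
        = (|(η : ℝ) - v| * ((η : ℝ) - s)) / (|(η : ℝ) - v| + ((η : ℝ) - s))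
            * (μ (η + 1) - μ η) ^ 2) ∧
    (v ≤ η →
      cusum s η e μ ^ 2 - cusum s v e μ ^ 2
        = (|(η : ℝ) - v| * ((e : ℝ) - η)) / (|(η : ℝ) - v| + ((e : ℝ) - η))
            * (μ (η + 1) - μ η) ^ 2) :=
  cusum_single_changepoint_general n μ s e η v hsη hηe hen hconstL hconstR hsv hve
end
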